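/- For m = 4 and A = {1,4}, the formal power series identity G_{A,A}(t) · (1 + t³)(1 − t⁴) = 1 + t² + t³ holds in ℤ[[t]]; equivalently, G_{{1,4},{1,4}}(t) = (1 + t² + t³)/((1 + t³)(1 − t⁴)). -/

import Mathlib

/-!
Index the vertices of `P_{m,n}` by row `a` and diagonal `j = a + b - 1`: then `P_{m,n}` is the
union of the columns `{(a, 1 - a + j) : 1 ≤ a ≤ m}`, `1 ≤ j ≤ n`, each column is independent, and
the only neighbours of the vertex in row `a` of column `j` inside column `j + 1` lie in rows `a`
and `a + 1`. Splitting off the last column `B` turns `Z(P_{m,n+1}(A, ·))` into `(-1)^{|A|} Tⁿ δ_A`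
for the transfer operator `(T f)(B) = (-1)^{|B|} Σ_{S compatible with B} f(S)`, so the `k`-th
coefficient of `G_{A,A}` is `(Tᵏ δ_A)(A)`. For `m = 4` and `A = {1,4}` a finite computation shows
that `(T³ + 1)(T⁴ - 1) δ_A` vanishes on the subsets of `{1,…,4}`, hence so does
`Tᵏ (T³ + 1)(T⁴ - 1) δ_A`; this is the linear recurrence satisfied by the coefficients of
`(1 + t² + t³) / ((1 + t³)(1 - t⁴))`.
-/

/-- Adjacency in the square grid graph on ℤ²: `v` and `w` are adjacent iff
`|v₁ − w₁| + |v₂ − w₂| = 1`. -/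
def gridAdj (v w : ℤ × ℤ) : Prop :=
  (v.1 - w.1).natAbs + (v.2 - w.2).natAbs = 1

/-- `σ` is an `(A,B)`-configuration on the parallelogram `P_{m,n}`:
an independent set of the induced subgraph of the grid on
`{(a,b) : 1 ≤ a ≤ m, 1 − a < b ≤ 1 − a + n}` whose trace on the left boundary
`{(a, 2−a)}` is prescribed by `A` and on the right boundary `{(a, 1−a+n)}`
by `B`. -/
def ParaConfig (m n : ℕ) (A B : Finset ℕ) (σ : Finset (ℤ × ℤ)) : Prop :=
  (∀ p ∈ σ, 1 ≤ p.1 ∧ p.1 ≤ (m : ℤ) ∧ 1 - p.1 < p.2 ∧ p.2 ≤ 1 - p.1 + (n : ℤ)) ∧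
  (∀ v ∈ σ, ∀ w ∈ σ, ¬ gridAdj v w) ∧
  (∀ a : ℕ, 1 ≤ a → a ≤ m →
    ((((a : ℤ), 2 - (a : ℤ)) ∈ σ ↔ a ∈ A) ∧
     (((a : ℤ), 1 - (a : ℤ) + (n : ℤ)) ∈ σ ↔ a ∈ B)))

/-- `Z(P_{m,n}(A,B)) = Σ_σ (−1)^{|σ|}` over all `(A,B)`-configurations `σ`. -/
noncomputable def Zpara (m n : ℕ) (A B : Finset ℕ) : ℤ :=
  ∑ᶠ σ ∈ {σ : Finset (ℤ × ℤ) | ParaConfig m n A B σ}, (-1 : ℤ) ^ σ.card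

/-- The generating function
`G_{A,A}(t) = 1 + (−1)^{|A|} Σ_{n ≥ 1} Z(P_{m,n+1}(A,A)) tⁿ ∈ ℤ[[t]]`. -/
noncomputable def Gser (m : ℕ) (A : Finset ℕ) : PowerSeries ℤ :=
  PowerSeries.mk fun k => if k = 0 then 1 else (-1 : ℤ) ^ A.card * Zpara m (k + 1) A A

open Finset PowerSeries

namespace Parallelogram

variable {B : Finset ℕ}

def column (j : ℕ) (B : Finset ℕ) : Finset (ℤ × ℤ) :=
  B.image fun a : ℕ => ((a : ℤ), 1 - (a : ℤ) + j)

theorem mem_column {j : ℕ} {p : ℤ × ℤ} :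
    p ∈ column j B ↔ ∃ a ∈ B, ((a : ℤ), 1 - (a : ℤ) + j) = p :=
  mem_image

theorem card_column (j : ℕ) (B : Finset ℕ) : #(column j B) = #B :=
  card_image_of_injective _ fun a b h => by simpa using congrArg Prod.fst h

@[simp] theorem mk_mem_column {a j : ℕ} : ((a : ℤ), 1 - (a : ℤ) + j) ∈ column j B ↔ a ∈ B := by
  simp [column]

theorem not_gridAdj_of_mem_column {j : ℕ} {p q : ℤ × ℤ} (hp : p ∈ column j B)
    (hq : q ∈ column j B) : ¬ gridAdj p q := by
  obtain ⟨a, -, rfl⟩ := mem_column.1 hp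
  obtain ⟨b, -, rfl⟩ := mem_column.1 hq
  unfold gridAdj
  omega

def Compatible (S B : Finset ℕ) : Prop :=
  ∀ a ∈ S, a ∉ B ∧ a + 1 ∉ B

instance : DecidableRel Compatible := fun S B =>
  inferInstanceAs (Decidable (∀ a ∈ S, a ∉ B ∧ a + 1 ∉ B))

def truncate (n : ℕ) (σ : Finset (ℤ × ℤ)) : Finset (ℤ × ℤ) :=
  σ.filter fun p => p.1 + p.2 ≤ (n : ℤ) + 1

def rightTrace (m n : ℕ) (σ : Finset (ℤ × ℤ)) : Finset ℕ :=
  (Icc 1 m).filter fun a : ℕ => ((a : ℤ), 1 - (a : ℤ) + n) ∈ σ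

end Parallelogram

open Parallelogram

namespace ParaConfig

variable {m n : ℕ} {A B S : Finset ℕ} {σ τ : Finset (ℤ × ℤ)}

theorem filter_not_le_eq_column (hB : B ⊆ Icc 1 m) (hσ : ParaConfig m (n + 1) A B σ) :
    σ.filter (fun p => ¬ p.1 + p.2 ≤ (n : ℤ) + 1) = column (n + 1) B := by
  obtain ⟨hdom, -, htrace⟩ := hσ
  ext ⟨x, y⟩
  simp only [mem_filter, mem_column]
  constructor
  · rintro ⟨hp, hxy⟩
    have hx := hdom _ hp
    simp only at hx hxy
    lift x to ℕ using by omega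
    have hy : y = 1 - x + ((n + 1 : ℕ) : ℤ) := by push_cast; omega
    subst hy
    exact ⟨x, ((htrace x (by omega) (by omega)).2).1 hp, rfl⟩
  · rintro ⟨a, ha, ⟨⟩⟩
    have ha' := mem_Icc.1 (hB ha)
    exact ⟨((htrace a ha'.1 ha'.2).2).2 ha, by push_cast; omega⟩

theorem truncate_union_column_eq (hB : B ⊆ Icc 1 m) (hσ : ParaConfig m (n + 1) A B σ) :
    truncate n σ ∪ column (n + 1) B = σ := by
  rw [← hσ.filter_not_le_eq_column hB, truncate, filter_union_filter_not_eq]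

theorem card_eq (hB : B ⊆ Icc 1 m) (hσ : ParaConfig m (n + 1) A B σ) :
    #σ = #(truncate n σ) + #B := by
  rw [← card_column (n + 1) B, ← hσ.filter_not_le_eq_column hB, truncate,
    card_filter_add_card_filter_not]

theorem column_one (hA : A ⊆ Icc 1 m) : ParaConfig m 1 A A (column 1 A) := by
  refine ⟨fun p hp => ?_, fun v hv w hw => ?_, fun a _ _ => ⟨?_, mk_mem_column⟩⟩
  · obtain ⟨a, ha, rfl⟩ := mem_column.1 hp
    have := mem_Icc.1 (hA ha)
    push_cast
    omega
  · exact not_gridAdj_of_mem_column hv hw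
  · rw [show (2 : ℤ) - a = 1 - a + ((1 : ℕ) : ℤ) by push_cast; ring, mk_mem_column]

theorem eq_column_one (hB : B ⊆ Icc 1 m) (hσ : ParaConfig m 1 A B σ) : σ = column 1 B := by
  rw [← hσ.filter_not_le_eq_column (n := 0) hB, filter_true_of_mem]
  intro p hp
  have := hσ.1 p hp
  omega

theorem eq_of_width_one (hA : A ⊆ Icc 1 m) (hB : B ⊆ Icc 1 m) (hσ : ParaConfig m 1 A B σ) :
    A = B := by
  ext a
  by_cases ha : 1 ≤ a ∧ a ≤ m
  · rw [← (hσ.2.2 a ha.1 ha.2).1, ← (hσ.2.2 a ha.1 ha.2).2,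
      show (2 : ℤ) - a = 1 - a + ((1 : ℕ) : ℤ) by push_cast; ring]
  · exact iff_of_false (fun h => ha (mem_Icc.1 (hA h))) (fun h => ha (mem_Icc.1 (hB h)))

theorem truncate (hn : 1 ≤ n) (hσ : ParaConfig m (n + 1) A B σ) :
    ParaConfig m n A (rightTrace m n σ) (Parallelogram.truncate n σ) := by
  obtain ⟨hdom, hind, htrace⟩ := hσ
  simp only [Parallelogram.truncate, ParaConfig, mem_filter]
  refine ⟨fun p hp => ?_, fun v hv w hw => hind v hv.1 w hw.1, fun a ha1 ham => ⟨?_, ?_⟩⟩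
  · have := hdom p hp.1
    push_cast at this
    omega
  · rw [← (htrace a ha1 ham).1]
    simp only [and_iff_left_iff_imp]
    omega
  · simp only [rightTrace, mem_filter, mem_Icc, ha1, ham, true_and, and_iff_left_iff_imp]
    omega

theorem compatible_rightTrace (hB : B ⊆ Icc 1 m) (hσ : ParaConfig m (n + 1) A B σ) :
    Compatible (rightTrace m n σ) B := by
  obtain ⟨-, hind, htrace⟩ := hσ
  intro a ha
  obtain ⟨ha', hmem⟩ := mem_filter.1 ha
  rw [mem_Icc] at ha'
  constructor
  · intro haB
    refine hind _ hmem _ ((htrace a ha'.1 ha'.2).2.2 haB) ?_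
    unfold gridAdj
    push_cast
    omega
  · intro haB
    have ha1 := mem_Icc.1 (hB haB)
    refine hind _ hmem _ ((htrace (a + 1) ha1.1 ha1.2).2.2 haB) ?_
    unfold gridAdj
    push_cast
    omega

theorem not_gridAdj_column (hc : Compatible S B) (hτ : ParaConfig m n A S τ) :
    ∀ p ∈ τ, ∀ q ∈ column (n + 1) B, ¬ gridAdj p q := by
  obtain ⟨hdom, -, htrace⟩ := hτ
  rintro ⟨x, y⟩ hp q hq hadj
  obtain ⟨a, ha, rfl⟩ := mem_column.1 hq
  have hx := hdom _ hp
  unfold gridAdj at hadj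
  push_cast at hx hadj
  -- only the right boundary of `τ` touches the new column, in the rows `a` and `a - 1`
  obtain ⟨rfl, hxa⟩ : y = 1 - x + n ∧ (x = a ∨ x + 1 = a) := by omega
  lift x to ℕ using by omega
  have hxS := ((htrace x (by omega) (by omega)).2).1 hp
  rcases hxa with h | h <;> norm_cast at h <;> subst h
  exacts [(hc x hxS).1 ha, (hc x hxS).2 ha]

theorem union_column (hn : 1 ≤ n) (hB : B ⊆ Icc 1 m) (hc : Compatible S B)
    (hτ : ParaConfig m n A S τ) : ParaConfig m (n + 1) A B (τ ∪ column (n + 1) B) := by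
  have hcross := hτ.not_gridAdj_column hc
  obtain ⟨hdom, hind, htrace⟩ := hτ
  refine ⟨?_, ?_, fun a ha1 ham => ⟨?_, ?_⟩⟩
  · rintro p hp
    rcases mem_union.1 hp with hp | hp
    · have := hdom p hp
      push_cast
      omega
    · obtain ⟨a, ha, rfl⟩ := mem_column.1 hp
      have := mem_Icc.1 (hB ha)
      push_cast
      omega
  · intro v hv w hw
    rcases mem_union.1 hv with hv | hv <;> rcases mem_union.1 hw with hw | hw
    · exact hind v hv w hw
    · exact hcross v hv w hw
    · exact fun h => hcross w hw v hv (by unfold gridAdj at h ⊢; omega)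
    · exact not_gridAdj_of_mem_column hv hw
  · rw [mem_union, (htrace a ha1 ham).1, or_iff_left]
    rintro hmem
    obtain ⟨b, -, hb⟩ := mem_column.1 hmem
    simp only [Prod.mk.injEq] at hb
    push_cast at hb
    omega
  · rw [mem_union, or_iff_right fun h => by have := hdom _ h; push_cast at this; omega,
      mk_mem_column]

theorem truncate_union_column (hτ : ParaConfig m n A S τ) :
    Parallelogram.truncate n (τ ∪ column (n + 1) B) = τ := by
  have hcol : ∀ p ∈ column (n + 1) B, ¬ p.1 + p.2 ≤ (n : ℤ) + 1 := by
    rintro _ hp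
    obtain ⟨a, -, rfl⟩ := mem_column.1 hp
    push_cast
    omega
  rw [Parallelogram.truncate, filter_union, filter_false_of_mem hcol, union_empty,
    filter_true_of_mem fun p hp => by have := hτ.1 p hp; omega]

theorem rightTrace_union_column (hS : S ⊆ Icc 1 m) (hτ : ParaConfig m n A S τ) :
    rightTrace m n (τ ∪ column (n + 1) B) = S := by
  ext a
  simp only [rightTrace, mem_filter, mem_union, mem_column]
  constructor
  · rintro ⟨ha, hτa | ⟨b, -, hb⟩⟩
    · have := mem_Icc.1 ha
      exact ((hτ.2.2 a this.1 this.2).2).1 hτa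
    · simp only [Prod.mk.injEq] at hb
      push_cast at hb
      omega
  · intro ha
    have := mem_Icc.1 (hS ha)
    exact ⟨hS ha, Or.inl (((hτ.2.2 a this.1 this.2).2).2 ha)⟩

end ParaConfig

namespace Parallelogram

variable {m n : ℕ} {A B : Finset ℕ} {σ : Finset (ℤ × ℤ)}

theorem finite_setOf_paraConfig (m n : ℕ) (A B : Finset ℕ) :
    {σ | ParaConfig m n A B σ}.Finite := by
  refine (Icc (1 : ℤ) m ×ˢ Icc (1 - m : ℤ) n).powerset.finite_toSet.subset fun σ hσ => ?_
  rw [mem_coe, mem_powerset]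
  intro p hp
  have := hσ.1 p hp
  simp only [mem_product, mem_Icc]
  omega

noncomputable def configs (m n : ℕ) (A B : Finset ℕ) : Finset (Finset (ℤ × ℤ)) :=
  (finite_setOf_paraConfig m n A B).toFinset

@[simp] theorem mem_configs : σ ∈ configs m n A B ↔ ParaConfig m n A B σ :=
  Set.Finite.mem_toFinset _

def transfer (m : ℕ) : Module.End ℤ (Finset ℕ → ℤ) where
  toFun f B := (-1) ^ #B * ∑ S ∈ (Icc 1 m).powerset with Compatible S B, f S
  map_add' f g := by
    ext B
    simp [sum_add_distrib, mul_add]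
  map_smul' c f := by
    ext B
    simp only [Pi.smul_apply, smul_eq_mul, mul_sum, RingHom.id_apply]
    exact sum_congr rfl fun _ _ => mul_left_comm _ _ _

theorem transfer_apply (f : Finset ℕ → ℤ) (B : Finset ℕ) :
    transfer m f B = (-1) ^ #B * ∑ S ∈ (Icc 1 m).powerset with Compatible S B, f S :=
  rfl

theorem transfer_congr {f g : Finset ℕ → ℤ} (h : ∀ S ⊆ Icc 1 m, f S = g S) :
    transfer m f = transfer m g := by
  ext B
  simp only [transfer_apply]
  congr 1
  exact sum_congr rfl fun S hS => h S (mem_powerset.1 (mem_filter.1 hS).1)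

end Parallelogram

open Parallelogram

variable {m n : ℕ} {A B : Finset ℕ}

theorem Zpara_eq_sum (m n : ℕ) (A B : Finset ℕ) :
    Zpara m n A B = ∑ σ ∈ configs m n A B, (-1) ^ #σ :=
  finsum_mem_eq_finite_toFinset_sum _ _

theorem Zpara_one (hA : A ⊆ Icc 1 m) (hB : B ⊆ Icc 1 m) :
    Zpara m 1 A B = if A = B then (-1) ^ #A else 0 := by
  have hconfigs : configs m 1 A B = if A = B then {column 1 A} else ∅ := by
    ext σ
    rw [mem_configs]
    constructor
    · intro hσ
      obtain rfl := hσ.eq_of_width_one hA hB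
      simp [hσ.eq_column_one hB]
    · split_ifs with h
      · rw [mem_singleton]
        rintro rfl
        exact h ▸ ParaConfig.column_one hA
      · simp
  rw [Zpara_eq_sum, hconfigs]
  split_ifs <;> simp [card_column]

theorem Zpara_succ (hn : 1 ≤ n) (hB : B ⊆ Icc 1 m) :
    Zpara m (n + 1) A B = transfer m (Zpara m n A) B := by
  simp only [transfer_apply, Zpara_eq_sum, mul_sum]
  rw [sum_sigma']
  refine sum_nbij' (fun σ => ⟨rightTrace m n σ, truncate n σ⟩)
    (fun q => q.2 ∪ column (n + 1) B) ?_ ?_ ?_ ?_ ?_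
  · intro σ hσ
    rw [mem_configs] at hσ
    simp only [mem_sigma, mem_filter, mem_powerset, mem_configs]
    exact ⟨⟨filter_subset _ _, hσ.compatible_rightTrace hB⟩, hσ.truncate hn⟩
  · rintro ⟨S, τ⟩ hq
    simp only [mem_sigma, mem_filter, mem_powerset, mem_configs] at hq ⊢
    exact hq.2.union_column hn hB hq.1.2
  · exact fun σ hσ => (mem_configs.1 hσ).truncate_union_column_eq hB
  · rintro ⟨S, τ⟩ hq
    simp only [mem_sigma, mem_filter, mem_powerset, mem_configs] at hq
    rw [hq.2.rightTrace_union_column hq.1.1, hq.2.truncate_union_column]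
  · intro σ hσ
    rw [(mem_configs.1 hσ).card_eq hB, pow_add, mul_comm]

theorem Zpara_succ_eq_transfer_pow (hA : A ⊆ Icc 1 m) (n : ℕ) (hB : B ⊆ Icc 1 m) :
    Zpara m (n + 1) A B = (-1) ^ #A * (transfer m ^ n) (Pi.single A 1) B := by
  induction n generalizing B with
  | zero => simp [Zpara_one hA hB, Pi.single_apply, eq_comm]
  | succ n ih =>
    rw [Zpara_succ (by omega) hB, transfer_congr fun S hS => ih hS, pow_succ',
      Module.End.mul_apply]
    exact congrFun (map_smul (transfer m) ((-1) ^ #A) _) B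

theorem coeff_Gser (hA : A ⊆ Icc 1 m) (k : ℕ) :
    coeff k (Gser m A) = (transfer m ^ k) (Pi.single A 1) A := by
  rw [Gser, coeff_mk]
  rcases k with _ | k
  · simp
  · rw [if_neg k.succ_ne_zero, Zpara_succ_eq_transfer_pow hA _ hA, ← mul_assoc, ← mul_pow]
    simp

theorem transfer_pow_apply_eq_zero {u : Finset ℕ → ℤ} (hu : ∀ S ⊆ Icc 1 m, u S = 0) (k : ℕ)
    (hB : B ⊆ Icc 1 m) : (transfer m ^ k) u B = 0 := by
  rcases k with _ | k
  · exact hu B hB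
  · rw [pow_succ, Module.End.mul_apply, transfer_congr (g := 0) hu, map_zero, map_zero]
    rfl

theorem transfer_four_annihilates_single : ∀ B ∈ (Icc 1 4).powerset,
    ((transfer 4 ^ 3 + 1) * (transfer 4 ^ 4 - 1) : Module.End ℤ (Finset ℕ → ℤ))
      (Pi.single {1, 4} 1) B = 0 := by
  decide

theorem Gser_one_four_coeff_recurrence (k : ℕ) :
    coeff (k + 7) (Gser 4 {1, 4}) + coeff (k + 4) (Gser 4 {1, 4}) =
      coeff (k + 3) (Gser 4 {1, 4}) + coeff k (Gser 4 {1, 4}) := by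
  have hA : ({1, 4} : Finset ℕ) ⊆ Icc 1 4 := by decide
  set T := transfer 4
  have hpow : T ^ k * ((T ^ 3 + 1) * (T ^ 4 - 1)) =
      T ^ (k + 7) + T ^ (k + 4) - T ^ (k + 3) - T ^ k := by
    simp only [pow_add]
    noncomm_ring
  have h := transfer_pow_apply_eq_zero
    (fun S hS => transfer_four_annihilates_single S (mem_powerset.2 hS)) k hA
  rw [← Module.End.mul_apply, hpow] at h
  simp only [coeff_Gser hA]
  simp only [LinearMap.sub_apply, LinearMap.add_apply, Pi.sub_apply, Pi.add_apply] at h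
  linarith

/-- For `m = 4` and `A = {1,4}`,
`G_{A,A}(t)·(1 + t³)(1 − t⁴) = 1 + t² + t³` in `ℤ[[t]]`. -/
theorem Gser_one_four :
    Gser 4 {1, 4} *
        ((1 + PowerSeries.X ^ 3) * (1 - PowerSeries.X ^ 4)) =
      1 + PowerSeries.X ^ 2 + PowerSeries.X ^ 3 := by
  rw [show ((1 : ℤ⟦X⟧) + X ^ 3) * (1 - X ^ 4) = 1 + X ^ 3 - X ^ 4 - X ^ 7 by ring]
  ext k
  simp only [mul_sub, mul_add, mul_one, map_sub, map_add, coeff_mul_X_pow', coeff_one,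
    coeff_X_pow]
  rcases lt_or_ge k 7 with hk | hk
  · interval_cases k <;> simp only [coeff_Gser (by decide : ({1, 4} : Finset ℕ) ⊆ Icc 1 4)] <;>
      decide
  · obtain ⟨j, rfl⟩ := Nat.exists_eq_add_of_le' hk
    simp only [le_add_iff_nonneg_left, zero_le, ↓reduceIte, add_tsub_cancel_right,
      Nat.reduceSubDiff, Nat.add_eq_zero_iff, Nat.reduceEqDiff, OfNat.ofNat_ne_zero, and_false,
      add_zero]
    linarith [Gser_one_four_coeff_recurrence j]
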